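/- Suppose c = c_⋆, where c_⋆ = -1 - x_⋆ - e^{x_⋆} and x_⋆ is the unique positive solution of x e^x/(1+e^x) = 1. Then there exists an open neighborhood N of the fixed point x_c^* in [0,1] such that for every x ∈ N and every integer t ≥ 1, |m_c^{2t}(x) − x_c^*| ≥ |x − x_c^*| / (2t). -/

import Mathlib

open Real MeasureTheory

noncomputable def sigmoid (x : ℝ) : ℝ := Real.exp x / (1 + Real.exp x)

noncomputable def mc (c x : ℝ) : ℝ := _root_.sigmoid (c * x)

open Filter Metric Topology


lemma arith_step (a d K k1 : ℝ) (hk1 : 1 ≤ k1) (ha0 : 0 ≤ a) (hK : 0 ≤ K)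
    (hud : a / k1 ≤ d) (hda : d ≤ a) (hKa : K * a ≤ 1/2) :
    a / (k1 + 1) ≤ d - K * d^2 := by
  have hk1p : (0:ℝ) < k1 := by linarith
  have hk2p : (0:ℝ) < k1 + 1 := by linarith
  set u := a / k1 with hu
  have hum : u * k1 = a := by rw [hu]; field_simp
  have hu0 : 0 ≤ u := by positivity
  have hKd : K * d ≤ 1/2 := by nlinarith
  have hKu : K * u ≤ K * d := by nlinarith
  have step2 : u - K * u^2 ≤ d - K * d^2 := by
    nlinarith [mul_nonneg (sub_nonneg.2 hud) (by nlinarith : (0:ℝ) ≤ 1 - K * (d + u))]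
  have step1 : a / (k1 + 1) ≤ u - K * u^2 := by
    rw [div_le_iff₀ hk2p]
    have hKu2 : K * u * (k1 + 1) ≤ 1 := by
      have h5 : K * u * k1 = K * a := by rw [← hum]; ring
      nlinarith [mul_nonneg hK hu0]
    nlinarith [mul_nonneg hu0 (sub_nonneg.2 hKu2)]
  linarith

lemma iterate_key (g : ℝ → ℝ) (xc δ K : ℝ) (hK : 0 ≤ K) (hKδ : K * δ ≤ 1/2)
    (hcontr : ∀ y, |y - xc| < δ → |g y - xc| ≤ |y - xc|)
    (hquad : ∀ y, |y - xc| < δ → |g y - y| ≤ K * (y - xc)^2) :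
    ∀ x, |x - xc| < δ → ∀ k : ℕ,
      |g^[k] x - xc| ≤ |x - xc| ∧ |x - xc| / (k + 1) ≤ |g^[k] x - xc| := by
  intro x hx k
  induction k with
  | zero =>
      simp
  | succ k ih =>
      obtain ⟨hub, hlb⟩ := ih
      have hyball : |g^[k] x - xc| < δ := lt_of_le_of_lt hub hx
      have h1 : |g (g^[k] x) - xc| ≤ |g^[k] x - xc| := hcontr _ hyball
      have h2 : |g (g^[k] x) - g^[k] x| ≤ K * (g^[k] x - xc)^2 := hquad _ hyball
      have hit : g^[k+1] x = g (g^[k] x) := Function.iterate_succ_apply' g k x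
      rw [hit]
      refine ⟨h1.trans hub, ?_⟩
      have h3 : |g^[k] x - xc| ≤ |g (g^[k] x) - xc| + |g (g^[k] x) - g^[k] x| := by
        have he : g^[k] x - xc = (g (g^[k] x) - xc) + (g^[k] x - g (g^[k] x)) := by ring
        calc |g^[k] x - xc| = |(g (g^[k] x) - xc) + (g^[k] x - g (g^[k] x))| := by rw [← he]
          _ ≤ |g (g^[k] x) - xc| + |g^[k] x - g (g^[k] x)| := abs_add_le _ _
          _ = |g (g^[k] x) - xc| + |g (g^[k] x) - g^[k] x| := by
              rw [abs_sub_comm (g^[k] x) (g (g^[k] x))]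
      have hKa : K * |x - xc| ≤ 1/2 := by nlinarith [abs_nonneg (x - xc)]
      have hsq : K * (g^[k] x - xc)^2 = K * |g^[k] x - xc|^2 := by rw [sq_abs]
      have hlow : |g^[k] x - xc| - K * |g^[k] x - xc|^2 ≤ |g (g^[k] x) - xc| := by
        nlinarith
      have hstep := arith_step (|x - xc|) (|g^[k] x - xc|) K ((k:ℝ) + 1)
        (by push_cast; linarith [Nat.cast_nonneg (α := ℝ) k]) (abs_nonneg _) hK hlb hub hKa
      have hcast : ((k:ℕ)+1 + 1 : ℝ) = ((k:ℝ) + 1) + 1 := by push_cast; ring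
      calc |x - xc| / ((k+1 : ℕ) + 1 : ℝ) = |x - xc| / (((k:ℝ) + 1) + 1) := by rw [← hcast]; norm_num
        _ ≤ |g^[k] x - xc| - K * |g^[k] x - xc|^2 := hstep
        _ ≤ |g (g^[k] x) - xc| := hlow

lemma one_add_exp_pos (u : ℝ) : 0 < 1 + Real.exp u := by positivity

lemma sigmoid_hasDerivAt (u : ℝ) :
    HasDerivAt _root_.sigmoid (_root_.sigmoid u * (1 - _root_.sigmoid u)) u := by
  have h1 : (1 : ℝ) + Real.exp u ≠ 0 := (one_add_exp_pos u).ne'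
  have h : HasDerivAt (fun x => Real.exp x / (1 + Real.exp x))
      ((Real.exp u * (1 + Real.exp u) - Real.exp u * (0 + Real.exp u)) / (1 + Real.exp u)^2) u :=
    (Real.hasDerivAt_exp u).div ((hasDerivAt_const u 1).add (Real.hasDerivAt_exp u)) h1
  refine h.congr_deriv ?_
  unfold _root_.sigmoid
  field_simp
  ring

lemma sigmoid_strictMono : StrictMono _root_.sigmoid := by
  intro u v huv
  unfold _root_.sigmoid
  rw [div_lt_div_iff₀ (one_add_exp_pos u) (one_add_exp_pos v)]
  have := Real.exp_lt_exp.mpr huv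
  nlinarith [Real.exp_pos u, Real.exp_pos v]

noncomputable def M1 (c x : ℝ) : ℝ := c * mc c x * (1 - mc c x)
noncomputable def M2 (c x : ℝ) : ℝ := c * M1 c x * (1 - 2 * mc c x)
noncomputable def M3 (c x : ℝ) : ℝ := c * M2 c x * (1 - 2 * mc c x) - 2 * c * (M1 c x)^2
noncomputable def G (c x : ℝ) : ℝ := mc c (mc c x)
noncomputable def G1 (c x : ℝ) : ℝ := M1 c (mc c x) * M1 c x
noncomputable def G2 (c x : ℝ) : ℝ := M2 c (mc c x) * (M1 c x)^2 + M1 c (mc c x) * M2 c x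
noncomputable def G3 (c x : ℝ) : ℝ :=
  M3 c (mc c x) * (M1 c x)^3 + 3 * M2 c (mc c x) * M1 c x * M2 c x + M1 c (mc c x) * M3 c x

lemma mc_hasDerivAt (c x : ℝ) : HasDerivAt (mc c) (M1 c x) x := by
  have h := (sigmoid_hasDerivAt (c * x)).comp x ((hasDerivAt_id x).const_mul c)
  have h2 : HasDerivAt (mc c) (_root_.sigmoid (c * x) * (1 - _root_.sigmoid (c * x)) * c) x := by
    exact h.congr_deriv (by ring)
  convert h2 using 1
  simp [M1, mc]; ring

lemma M1_hasDerivAt (c x : ℝ) : HasDerivAt (M1 c) (M2 c x) x := by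
  have h := (((mc_hasDerivAt c x).const_mul c).mul
    ((hasDerivAt_const x (1:ℝ)).sub (mc_hasDerivAt c x)))
  refine h.congr_deriv ?_
  simp [M2, M1]; ring

lemma M2_hasDerivAt (c x : ℝ) : HasDerivAt (M2 c) (M3 c x) x := by
  have h := (((M1_hasDerivAt c x).const_mul c).mul
    ((hasDerivAt_const x (1:ℝ)).sub ((mc_hasDerivAt c x).const_mul 2)))
  refine h.congr_deriv ?_
  simp [M3, M2]; ring

lemma G_hasDerivAt (c x : ℝ) : HasDerivAt (G c) (G1 c x) x := by
  have h := (mc_hasDerivAt c (mc c x)).comp x (mc_hasDerivAt c x)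
  exact h

lemma G1_hasDerivAt (c x : ℝ) : HasDerivAt (G1 c) (G2 c x) x := by
  have h := ((M1_hasDerivAt c (mc c x)).comp x (mc_hasDerivAt c x)).mul (M1_hasDerivAt c x)
  refine h.congr_deriv ?_
  simp [G2, Function.comp]; ring

lemma G2_hasDerivAt (c x : ℝ) : HasDerivAt (G2 c) (G3 c x) x := by
  have h := (((M2_hasDerivAt c (mc c x)).comp x (mc_hasDerivAt c x)).mul
      ((M1_hasDerivAt c x).pow 2)).add
    (((M1_hasDerivAt c (mc c x)).comp x (mc_hasDerivAt c x)).mul (M2_hasDerivAt c x))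
  refine h.congr_deriv ?_
  simp [G3, Function.comp]; ring


lemma vals_at_fix (c xc : ℝ) (hfix : mc c xc = xc) (hder : c * xc * (1 - xc) = -1) :
    M1 c xc = -1 ∧ G1 c xc = 1 ∧ G2 c xc = 0 ∧ G3 c xc = 4*c - (c*(1-2*xc))^2 := by
  have hM1 : M1 c xc = -1 := by rw [M1, hfix]; exact hder
  have hM2 : M2 c xc = -c * (1 - 2*xc) := by rw [M2, hfix, hM1]; ring
  have hM3 : M3 c xc = c * (-c * (1 - 2*xc)) * (1 - 2*xc) - 2*c := by
    rw [M3, hfix, hM1, hM2]; ring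
  refine ⟨hM1, ?_, ?_, ?_⟩
  · rw [G1, hfix, hM1]; ring
  · rw [G2, hfix, hM1, hM2]; ring
  · rw [G3, hfix, hM1, hM2, hM3]; ring

lemma local_control (c xc : ℝ) (hfix : mc c xc = xc) (hder : c * xc * (1 - xc) = -1)
    (hcneg : c < 0) :
    ∃ δ : ℝ, 0 < δ ∧ ∃ K : ℝ, 0 ≤ K ∧ K * δ ≤ 1/2 ∧
      (∀ y, |y - xc| < δ → |G c y - xc| ≤ |y - xc|) ∧
      (∀ y, |y - xc| < δ → |G c y - y| ≤ K * (y - xc)^2) := by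
  obtain ⟨hM1, hG1, hG2, hG3eq⟩ := vals_at_fix c xc hfix hder
  have hG3neg : G3 c xc < 0 := by rw [hG3eq]; nlinarith [sq_nonneg (c * (1 - 2*xc))]
  have hGfix : G c xc = xc := by rw [G, hfix, hfix]
  have hG1cont : Continuous (G1 c) :=
    Differentiable.continuous (fun x => (G1_hasDerivAt c x).differentiableAt)
  have hG2cont : Continuous (G2 c) :=
    Differentiable.continuous (fun x => (G2_hasDerivAt c x).differentiableAt)
  -- slope of G2 near xc is negative
  have hslope : Tendsto (slope (G2 c) xc) (𝓝[≠] xc) (𝓝 (G3 c xc)) :=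
    hasDerivAt_iff_tendsto_slope.mp (G2_hasDerivAt c xc)
  have hev : ∀ᶠ y in 𝓝[≠] xc, slope (G2 c) xc y < 0 :=
    hslope.eventually (eventually_lt_nhds hG3neg)
  rw [eventually_nhdsWithin_iff, Metric.eventually_nhds_iff] at hev
  obtain ⟨ε, hε, hevs⟩ := hev
  have hG2sign : ∀ y, |y - xc| < ε → y ≠ xc → G2 c y / (y - xc) < 0 := by
    intro y h1 h2
    have hs := hevs (y := y) (by rwa [Real.dist_eq]) (by simpa using h2)
    rw [slope_def_field, hG2, sub_zero] at hs
    exact hs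
  have hG2neg : ∀ y, xc < y → y - xc < ε → G2 c y < 0 := by
    intro y h1 h2
    have hs := hG2sign y (by rw [abs_of_pos (by linarith)]; linarith)
      (by intro h; rw [h] at h1; exact lt_irrefl _ h1)
    rcases div_neg_iff.mp hs with ⟨h3, h4⟩ | ⟨h3, h4⟩
    · linarith
    · exact h3
  have hG2pos : ∀ y, y < xc → xc - y < ε → 0 < G2 c y := by
    intro y h1 h2
    have hs := hG2sign y (by rw [abs_of_neg (by linarith)]; linarith)
      (by intro h; rw [h] at h1; exact lt_irrefl _ h1)
    rcases div_neg_iff.mp hs with ⟨h3, h4⟩ | ⟨h3, h4⟩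
    · exact h3
    · linarith
  -- G1 ≤ 1 on a neighborhood
  set r := ε/2 with hr
  have hr0 : 0 < r := by positivity
  have hanti : StrictAntiOn (G1 c) (Set.Icc xc (xc + r)) := by
    apply strictAntiOn_of_deriv_neg (convex_Icc _ _) hG1cont.continuousOn
    intro y hy
    rw [interior_Icc] at hy
    rw [(G1_hasDerivAt c y).deriv]
    exact hG2neg y hy.1 (by have := hy.2; simp only [hr] at *; linarith)
  have hmono : StrictMonoOn (G1 c) (Set.Icc (xc - r) xc) := by
    apply strictMonoOn_of_deriv_pos (convex_Icc _ _) hG1cont.continuousOn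
    intro y hy
    rw [interior_Icc] at hy
    rw [(G1_hasDerivAt c y).deriv]
    exact hG2pos y hy.2 (by have := hy.1; simp only [hr] at *; linarith)
  have hG1le : ∀ y, |y - xc| < r → G1 c y ≤ 1 := by
    intro y hy
    rw [abs_lt] at hy
    rcases lt_trichotomy y xc with h | h | h
    · have := hmono (Set.mem_Icc.mpr ⟨by linarith, by linarith⟩)
        (Set.mem_Icc.mpr ⟨by linarith, le_refl xc⟩) h
      rw [hG1] at this; linarith
    · rw [h, hG1]
    · have := hanti (Set.mem_Icc.mpr ⟨le_refl xc, by linarith⟩)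
        (Set.mem_Icc.mpr ⟨by linarith, by linarith⟩) h
      rw [hG1] at this; linarith
  -- G1 > 0 on a neighborhood
  have hposev : ∀ᶠ y in 𝓝 xc, 0 < G1 c y := by
    have h01 : (0:ℝ) < G1 c xc := by rw [hG1]; norm_num
    exact hG1cont.continuousAt.eventually (eventually_gt_nhds h01)
  rw [Metric.eventually_nhds_iff] at hposev
  obtain ⟨ε2, hε2, hpos⟩ := hposev
  set δ3 := min r ε2 with hδ3
  have hδ30 : 0 < δ3 := lt_min hr0 hε2
  -- contraction on ball xc δ3
  have hcontr : ∀ y, |y - xc| < δ3 → |G c y - xc| ≤ |y - xc| := by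
    intro y hy
    have hmem : y ∈ Metric.ball xc δ3 := by rwa [Metric.mem_ball, Real.dist_eq]
    have hmemc : xc ∈ Metric.ball xc δ3 := Metric.mem_ball_self hδ30
    have hb := Convex.norm_image_sub_le_of_norm_deriv_le
      (f := G c) (s := Metric.ball xc δ3) (C := 1)
      (fun z _ => (G_hasDerivAt c z).differentiableAt)
      (fun z hz => by
        rw [(G_hasDerivAt c z).deriv, Real.norm_eq_abs, abs_le]
        rw [Metric.mem_ball, Real.dist_eq] at hz
        constructor
        · have := hpos (y := z) (by rw [Real.dist_eq]; exact lt_of_lt_of_le hz (min_le_right _ _))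
          linarith
        · exact hG1le z (lt_of_lt_of_le hz (min_le_left _ _)))
      (convex_ball _ _) hmemc hmem
    rw [hGfix, Real.norm_eq_abs, Real.norm_eq_abs, one_mul] at hb
    exact hb
  -- quadratic bound
  obtain ⟨C, hC⟩ := (isCompact_closedBall xc δ3).exists_bound_of_continuousOn
    hG2cont.continuousOn
  have hC0 : 0 ≤ C := le_trans (norm_nonneg _) (hC xc (Metric.mem_closedBall_self hδ30.le))
  have hG1near : ∀ z ∈ Metric.closedBall xc δ3, |G1 c z - 1| ≤ C * |z - xc| := by
    intro z hz
    have hb := Convex.norm_image_sub_le_of_norm_deriv_le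
      (f := G1 c) (s := Metric.closedBall xc δ3) (C := C)
      (fun w _ => (G1_hasDerivAt c w).differentiableAt)
      (fun w hw => by rw [(G1_hasDerivAt c w).deriv]; exact hC w hw)
      (convex_closedBall _ _) (Metric.mem_closedBall_self hδ30.le) hz
    rw [hG1, Real.norm_eq_abs, Real.norm_eq_abs] at hb
    exact hb
  have hquad : ∀ y, |y - xc| < δ3 → |G c y - y| ≤ C * (y - xc)^2 := by
    intro y hy
    have hsub : Metric.closedBall xc |y - xc| ⊆ Metric.closedBall xc δ3 :=
      Metric.closedBall_subset_closedBall hy.le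
    have hb := Convex.norm_image_sub_le_of_norm_deriv_le
      (f := fun z => G c z - z) (s := Metric.closedBall xc |y - xc|) (C := C * |y - xc|)
      (fun z _ => ((G_hasDerivAt c z).sub (hasDerivAt_id z)).differentiableAt)
      (fun z hz => by
        have hd : HasDerivAt (fun z => G c z - z) (G1 c z - 1) z := by
          exact (G_hasDerivAt c z).sub (hasDerivAt_id z)
        rw [hd.deriv, Real.norm_eq_abs]
        have h1 := hG1near z (hsub hz)
        rw [Metric.mem_closedBall, Real.dist_eq] at hz
        nlinarith [abs_nonneg (z - xc)])
      (convex_closedBall _ _)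
      (Metric.mem_closedBall_self (abs_nonneg _))
      (by rw [Metric.mem_closedBall, Real.dist_eq])
    rw [hGfix, sub_self, sub_zero, Real.norm_eq_abs, Real.norm_eq_abs] at hb
    calc |G c y - y| ≤ C * |y - xc| * |y - xc| := hb
      _ = C * (y - xc)^2 := by rw [mul_assoc, abs_mul_abs_self]; ring
  -- final choice
  refine ⟨min δ3 (1/(2*(C+1))), lt_min hδ30 (by positivity), C, hC0, ?_, ?_, ?_⟩
  · have h1 : min δ3 (1/(2*(C+1))) ≤ 1/(2*(C+1)) := min_le_right _ _
    have h2 : C * (1/(2*(C+1))) ≤ 1/2 := by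
      rw [mul_one_div, div_le_div_iff₀ (by positivity : (0:ℝ) < 2*(C+1)) (by norm_num : (0:ℝ) < 2)]
      nlinarith
    nlinarith [mul_le_mul_of_nonneg_left h1 hC0]
  · intro y hy; exact hcontr y (lt_of_lt_of_le hy (min_le_left _ _))
  · intro y hy; exact hquad y (lt_of_lt_of_le hy (min_le_left _ _))

/-- If c = c⋆, there is an open neighborhood N of the fixed point such that
|m_c^{2t}(x) − x_c^*| ≥ |x − x_c^*|/(2t) for x ∈ N and t ≥ 1. -/
theorem critical_iterate_lower (xs c xc : ℝ)
    (hxs : 0 < xs ∧ xs * Real.exp xs / (1 + Real.exp xs) = 1)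
    (hc : c = -1 - xs - Real.exp xs)
    (hxc : xc ∈ Set.Icc (0:ℝ) 1 ∧ mc c xc = xc) :
    ∃ N : Set ℝ, IsOpen N ∧ xc ∈ N ∧
      ∀ x ∈ N ∩ Set.Icc (0:ℝ) 1, ∀ t : ℕ, 1 ≤ t →
        |(mc c)^[2*t] x - xc| ≥ |x - xc| / (2*t) := by
  obtain ⟨hxs0, hxseq⟩ := hxs
  have hE : 0 < Real.exp xs := Real.exp_pos xs
  have h1E : (0:ℝ) < 1 + Real.exp xs := by linarith
  have heq : xs * Real.exp xs = 1 + Real.exp xs := by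
    field_simp at hxseq; linarith
  have hcneg : c < 0 := by rw [hc]; linarith
  have hfix : mc c xc = xc := hxc.2
  -- xc = 1/(1+exp xs)
  have hfix0 : mc c (1/(1 + Real.exp xs)) = 1/(1 + Real.exp xs) := by
    have hcx : c * (1/(1 + Real.exp xs)) = -xs := by
      rw [hc]; field_simp; linarith
    rw [mc, hcx, _root_.sigmoid, Real.exp_neg]
    rw [eq_div_iff h1E.ne']
    field_simp
    ring
  have hanti : StrictAnti (mc c) := by
    intro a b hab
    exact sigmoid_strictMono (by nlinarith : c * b < c * a)
  have hxcval : xc = 1/(1 + Real.exp xs) := by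
    rcases lt_trichotomy xc (1/(1 + Real.exp xs)) with h | h | h
    · have := hanti h; rw [hfix, hfix0] at this; linarith
    · exact h
    · have := hanti h; rw [hfix, hfix0] at this; linarith
  have hder : c * xc * (1 - xc) = -1 := by
    rw [hxcval, hc]
    field_simp
    nlinarith
  obtain ⟨δ, hδ0, K, hK0, hKδ, hcontr, hquad⟩ := local_control c xc hfix hder hcneg
  refine ⟨Metric.ball xc δ, Metric.isOpen_ball, Metric.mem_ball_self hδ0, ?_⟩
  intro x hx t ht
  have hxball : |x - xc| < δ := by
    have := hx.1; rwa [Metric.mem_ball, Real.dist_eq] at this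
  have hkey := (iterate_key (G c) xc δ K hK0 hKδ hcontr hquad x hxball t).2
  have h2 : (mc c)^[2] = G c := by
    funext y
    rw [Function.iterate_succ_apply', Function.iterate_one]
    rfl
  have hiter : (mc c)^[2*t] x = (G c)^[t] x := by
    rw [Function.iterate_mul, h2]
  rw [ge_iff_le, hiter]
  have ht1 : (1:ℝ) ≤ (t:ℝ) := by exact_mod_cast ht
  have hle : |x - xc| / (2*(t:ℝ)) ≤ |x - xc| / ((t:ℝ) + 1) :=
    div_le_div_of_nonneg_left (abs_nonneg _) (by linarith) (by linarith)
  calc |x - xc| / (2*(t:ℝ)) ≤ |x - xc| / ((t:ℝ) + 1) := hle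
    _ ≤ |(G c)^[t] x - xc| := hkey
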